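/- For every integer Q ≥ 2 and every real γ ≥ 0, the exposure-time estimand weights of the immediate treatment effect estimator sum to one: Σ_{s=1}^{Q} w₁(Q,γ,s) = Σ_{s=1}^{Q} 6(s−Q−1)((1+2γQ)s−(1+γ+γQ)Q)/(Q(Q+1)(γQ²+2Q−γQ−2)) = 1. -/
import Mathlib


/-- The estimand weight `w₁(Q,γ,s)` of the exposure time-varying treatment effect
`δ_s` in the misspecified immediate treatment effect estimator. -/
noncomputable def w1 (Q : ℕ) (γ : ℝ) (s : ℕ) : ℝ :=
  6 * ((s : ℝ) - (Q : ℝ) - 1) *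
      ((1 + 2 * γ * (Q : ℝ)) * (s : ℝ) - (1 + γ + γ * (Q : ℝ)) * (Q : ℝ)) /
    ((Q : ℝ) * ((Q : ℝ) + 1) * (γ * (Q : ℝ) ^ 2 + 2 * (Q : ℝ) - γ * (Q : ℝ) - 2))

lemma sum_Icc_id_real (n : ℕ) : ∑ s ∈ Finset.Icc 1 n, (s : ℝ) = n * (n + 1) / 2 := by
  induction n with
  | zero => simp
  | succ k ih =>
    rw [Finset.sum_Icc_succ_top (by omega), ih]
    push_cast
    ring

lemma sum_Icc_sq_real (n : ℕ) :
    ∑ s ∈ Finset.Icc 1 n, (s : ℝ) ^ 2 = n * (n + 1) * (2 * n + 1) / 6 := by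
  induction n with
  | zero => simp
  | succ k ih =>
    rw [Finset.sum_Icc_succ_top (by omega), ih]
    push_cast
    ring

/-- The exposure-time estimand weights of the immediate treatment effect estimator
sum to one: `Σ_{s=1}^{Q} w₁(Q,γ,s) = 1`. -/
theorem IT_exposure_weights_sum_to_one (Q : ℕ) (hQ : 2 ≤ Q) (γ : ℝ) (hγ : 0 ≤ γ) :
    ∑ s ∈ Finset.Icc 1 Q, w1 Q γ s = 1 := by
  have hQ2 : (2 : ℝ) ≤ (Q : ℝ) := by exact_mod_cast hQ
  have hD : (Q : ℝ) * ((Q : ℝ) + 1) * (γ * (Q : ℝ) ^ 2 + 2 * (Q : ℝ) - γ * (Q : ℝ) - 2) ≠ 0 := by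
    have h1 : (0 : ℝ) < Q := by linarith
    have h2 : (0 : ℝ) < (Q : ℝ) + 1 := by linarith
    have h3 : (0 : ℝ) < γ * (Q : ℝ) ^ 2 + 2 * (Q : ℝ) - γ * (Q : ℝ) - 2 := by
      have : γ * (Q : ℝ) ^ 2 + 2 * (Q : ℝ) - γ * (Q : ℝ) - 2
          = ((Q : ℝ) - 1) * (γ * Q + 2) := by ring
      rw [this]
      have : (0 : ℝ) ≤ γ * Q := mul_nonneg hγ (by linarith)
      nlinarith
    positivity
  unfold w1
  rw [← Finset.sum_div, div_eq_one_iff_eq hD]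
  have hexp : ∀ s ∈ Finset.Icc 1 Q,
      6 * ((s : ℝ) - (Q : ℝ) - 1) *
        ((1 + 2 * γ * (Q : ℝ)) * (s : ℝ) - (1 + γ + γ * (Q : ℝ)) * (Q : ℝ))
      = (6 * (1 + 2 * γ * Q)) * (s : ℝ) ^ 2
        + (-6 * ((Q + 1) * (1 + 2 * γ * Q) + (1 + γ + γ * Q) * Q)) * (s : ℝ)
        + (6 * (Q + 1) * (1 + γ + γ * Q) * Q) := by
    intro s _
    ring
  rw [Finset.sum_congr rfl hexp]
  simp only [Finset.sum_add_distrib, ← Finset.mul_sum, Finset.sum_const,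
    Nat.card_Icc, nsmul_eq_mul]
  rw [sum_Icc_sq_real, sum_Icc_id_real]
  have hcard : ((Q + 1 - 1 : ℕ) : ℝ) = (Q : ℝ) := by
    push_cast [Nat.add_sub_cancel]; ring
  rw [hcard]
  ring
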